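/- Let Λ be a semiring and let E : G --κ--> B --σ--> C be a Schreier short exact sequence of chain complexes of Λ-semimodules, where G is an ordinary chain complex of Λ-modules {G_n, d_n} (each G_n an abelian group under addition, d_n d_{n+1} = 0, regarded as a chain complex with positive differential d_n and negative differential 0), κ is a morphism, and σ is a ±-morphism. Then the long homology sequence is exact at H_n(B) and H_n(σ) is normal; concretely: for every n and all b₁, b₂ ∈ Z_n(B) with σ_n(b₁) ρ_n(C) σ_n(b₂), there exist g ∈ G_n with d_n(g) = 0 and x, y ∈ B_{n+1} such that b₁ + ∂_{n+1}⁺(x) + ∂_{n+1}⁻(y) = κ_n(g) + b₂ + ∂_{n+1}⁺(y) + ∂_{n+1}⁻(x). -/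
import Mathlib


/-- A chain complex of `Λ`-semimodules: `Λ`-semimodules `X n` (`n : ℤ`) together with
`Λ`-homomorphisms `dp n, dm n : X (n+1) → X n` (the positive and negative differentials
out of level `n+1`) satisfying `∂⁺∂⁺ + ∂⁻∂⁻ = ∂⁺∂⁻ + ∂⁻∂⁺`. -/
structure SComplex (Λ : Type*) [Semiring Λ] where
  X : ℤ → Type*
  [acm : ∀ n, AddCommMonoid (X n)]
  [mod : ∀ n, Module Λ (X n)]
  dp : ∀ n : ℤ, X (n + 1) →ₗ[Λ] X n
  dm : ∀ n : ℤ, X (n + 1) →ₗ[Λ] X n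
  chain : ∀ (n : ℤ) (x : X (n + 1 + 1)),
    dp n (dp (n + 1) x) + dm n (dm (n + 1) x) = dp n (dm (n + 1) x) + dm n (dp (n + 1) x)

attribute [instance] SComplex.acm SComplex.mod

/-- A morphism of chain complexes of `Λ`-semimodules: a family of `Λ`-homomorphisms
`f n : A.X n → B.X n` with `∂'⁺ f + f ∂⁻ = ∂'⁻ f + f ∂⁺`. -/
def IsMorphism {Λ : Type*} [Semiring Λ] (A B : SComplex Λ)
    (f : ∀ n, A.X n →ₗ[Λ] B.X n) : Prop :=
  ∀ (n : ℤ) (x : A.X (n + 1)),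
    B.dp n (f (n + 1) x) + f n (A.dm n x) = B.dm n (f (n + 1) x) + f n (A.dp n x)

/-- A ±-morphism of chain complexes: a family commuting separately with the positive and
negative differentials. -/
def IsPMMorphism {Λ : Type*} [Semiring Λ] (A B : SComplex Λ)
    (f : ∀ n, A.X n →ₗ[Λ] B.X n) : Prop :=
  ∀ (n : ℤ) (x : A.X (n + 1)),
    f n (A.dp n x) = B.dp n (f (n + 1) x) ∧ f n (A.dm n x) = B.dm n (f (n + 1) x)

/-- A Schreier extension of `Λ`-semimodules. -/
def IsSchreierExt {Λ A B C : Type*} [Semiring Λ] [AddCommMonoid A] [AddCommMonoid B]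
    [AddCommMonoid C] [Module Λ A] [Module Λ B] [Module Λ C]
    (l : A →ₗ[Λ] B) (t : B →ₗ[Λ] C) : Prop :=
  Function.Injective l ∧ Function.Surjective t ∧
    (∀ b : B, t b = 0 ↔ ∃ a : A, l a = b) ∧
    ∀ c : C, ∃ u : B, t u = c ∧ ∀ b : B, t b = c → ∃! a : A, b = l a + u

/-- A representative of a Schreier extension: `u : B` such that every element of the
fiber of `t` over `t u` is uniquely of the form `l a + u`. -/
def IsRep {Λ A B C : Type*} [Semiring Λ] [AddCommMonoid A] [AddCommMonoid B]
    [AddCommMonoid C] [Module Λ A] [Module Λ B] [Module Λ C]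
    (l : A →ₗ[Λ] B) (t : B →ₗ[Λ] C) (u : B) : Prop :=
  ∀ b : B, t b = t u → ∃! a : A, b = l a + u

/-- A Schreier short exact sequence of chain complexes of `Λ`-semimodules: a pair of
morphisms of chain complexes each of whose levels is a Schreier extension. -/
def IsSchreierSES {Λ : Type*} [Semiring Λ] (A B C : SComplex Λ)
    (κ : ∀ n, A.X n →ₗ[Λ] B.X n) (σ : ∀ n, B.X n →ₗ[Λ] C.X n) : Prop :=
  IsMorphism A B κ ∧ IsMorphism B C σ ∧ ∀ n, IsSchreierExt (κ n) (σ n)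
private lemma schreier_factor {Λ A B C : Type*} [Semiring Λ] [AddCommMonoid A]
    [AddCommMonoid B] [AddCommMonoid C] [Module Λ A] [Module Λ B] [Module Λ C]
    {l : A →ₗ[Λ] B} {t : B →ₗ[Λ] C} (h : IsSchreierExt l t)
    (hgrp : ∀ a : A, ∃ a' : A, a + a' = 0)
    {v u : B} (hvu : t v = t u) : ∃ g : A, v = l g + u := by
  obtain ⟨-, -, -, hrep⟩ := h
  obtain ⟨u₀, hu₀, hall⟩ := hrep (t u)
  obtain ⟨a₁, ha₁, -⟩ := hall v hvu
  obtain ⟨a₂, ha₂, -⟩ := hall u rfl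
  obtain ⟨a₂', ha₂'⟩ := hgrp a₂
  refine ⟨a₁ + a₂', ?_⟩
  have : a₂' + a₂ = 0 := by rwa [add_comm] at ha₂'
  have hz : l a₂' + l a₂ = 0 := by rw [← map_add, this, map_zero]
  rw [ha₁, ha₂, map_add]
  calc l a₁ + u₀ = l a₁ + (l a₂' + l a₂) + u₀ := by rw [hz, add_zero]
    _ = l a₁ + l a₂' + (l a₂ + u₀) := by abel

private lemma schreier_cancel {Λ A B C : Type*} [Semiring Λ] [AddCommMonoid A]
    [AddCommMonoid B] [AddCommMonoid C] [Module Λ A] [Module Λ B] [Module Λ C]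
    {l : A →ₗ[Λ] B} {t : B →ₗ[Λ] C} (h : IsSchreierExt l t)
    (hgrp : ∀ a : A, ∃ a' : A, a + a' = 0)
    {a : A} {b : B} (hab : l a + b = b) : a = 0 := by
  obtain ⟨-, -, -, hrep⟩ := h
  obtain ⟨u₀, hu₀, hall⟩ := hrep (t b)
  obtain ⟨a₁, ha₁, huniq⟩ := hall b rfl
  have h2 : b = l (a + a₁) + u₀ := by
    rw [map_add]
    calc b = l a + b := hab.symm
      _ = l a + (l a₁ + u₀) := by rw [← ha₁]
      _ = l a + l a₁ + u₀ := by rw [add_assoc]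
  have he : a + a₁ = a₁ := huniq _ h2
  obtain ⟨a₁', ha₁'⟩ := hgrp a₁
  calc a = a + (a₁ + a₁') := by rw [ha₁', add_zero]
    _ = (a + a₁) + a₁' := by rw [add_assoc]
    _ = a₁ + a₁' := by rw [he]
    _ = 0 := ha₁'

/-- Let `E : G --κ--> B --σ--> C` be a Schreier short exact sequence of chain complexes
of `Λ`-semimodules with `G` an ordinary chain complex of `Λ`-modules (additive groups,
negative differentials zero), `κ` a morphism and `σ` a ±-morphism.  Then the long
homology sequence is exact at `Hₙ(B)` and `Hₙ(σ)` is normal: whenever `b₁, b₂` are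
cycles of `B` with `σ b₁ ρ σ b₂`, there is a cycle `g` of `G` with
`b₁ ρ (κ g + b₂)`, witnessed explicitly. -/
theorem exact_at_B_and_sigma_normal
    {Λ : Type*} [Semiring Λ] (G B C : SComplex Λ)
    (κ : ∀ n, G.X n →ₗ[Λ] B.X n) (σ : ∀ n, B.X n →ₗ[Λ] C.X n)
    (hκ : IsMorphism G B κ) (hσ : IsPMMorphism B C σ)
    (hlev : ∀ n, IsSchreierExt (κ n) (σ n))
    (hGgrp : ∀ (n : ℤ) (g : G.X n), ∃ g' : G.X n, g + g' = 0)
    (hGm : ∀ n : ℤ, G.dm n = 0) :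
    ∀ (m : ℤ) (b₁ b₂ : B.X (m + 1)),
      B.dp m b₁ = B.dm m b₁ → B.dp m b₂ = B.dm m b₂ →
      (∃ p q : C.X (m + 1 + 1),
        σ (m + 1) b₁ + C.dp (m + 1) p + C.dm (m + 1) q =
          σ (m + 1) b₂ + C.dp (m + 1) q + C.dm (m + 1) p) →
      ∃ g : G.X (m + 1), G.dp m g = 0 ∧
        ∃ x y : B.X (m + 1 + 1),
          b₁ + B.dp (m + 1) x + B.dm (m + 1) y =
            κ (m + 1) g + b₂ + B.dp (m + 1) y + B.dm (m + 1) x := by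
  intro m b₁ b₂ h₁ h₂ ⟨p, q, hpq⟩
  obtain ⟨x, hx⟩ := (hlev (m + 1 + 1)).2.1 p
  obtain ⟨y, hy⟩ := (hlev (m + 1 + 1)).2.1 q
  set v := b₁ + B.dp (m + 1) x + B.dm (m + 1) y with hv_def
  set u := b₂ + B.dp (m + 1) y + B.dm (m + 1) x with hu_def
  have hσv : σ (m + 1) v = σ (m + 1) u := by
    have hxp := (hσ (m + 1) x).1
    have hxm := (hσ (m + 1) x).2
    have hyp := (hσ (m + 1) y).1
    have hym := (hσ (m + 1) y).2
    rw [hv_def, hu_def, map_add, map_add, map_add, map_add,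
      hxp, hxm, hyp, hym, hx, hy]
    exact hpq
  obtain ⟨g, hg⟩ := schreier_factor (hlev (m + 1)) (hGgrp (m + 1)) hσv
  -- show G.dp m g = 0
  have hκg : B.dp m (κ (m + 1) g) = B.dm m (κ (m + 1) g) + κ m (G.dp m g) := by
    have := hκ m g
    rwa [hGm m, LinearMap.zero_apply, map_zero, add_zero] at this
  have hdpv : B.dp m v = B.dm m (κ (m + 1) g) + κ m (G.dp m g) + B.dp m u := by
    rw [hg, map_add, hκg]
  have hdmv : B.dm m v = B.dm m (κ (m + 1) g) + B.dm m u := by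
    rw [hg, map_add]
  have hkey : B.dp m v + B.dm m u = B.dm m v + B.dp m u := by
    have cx := B.chain m x
    have cy := B.chain m y
    rw [hv_def, hu_def]
    simp only [map_add]
    rw [h₁, h₂]
    calc B.dm m b₁ + B.dp m (B.dp (m+1) x) + B.dp m (B.dm (m+1) y) +
          (B.dm m b₂ + B.dm m (B.dp (m+1) y) + B.dm m (B.dm (m+1) x))
        = B.dm m b₁ + B.dm m b₂ +
          (B.dp m (B.dp (m+1) x) + B.dm m (B.dm (m+1) x)) +
          (B.dp m (B.dm (m+1) y) + B.dm m (B.dp (m+1) y)) := by abel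
      _ = B.dm m b₁ + B.dm m b₂ +
          (B.dp m (B.dm (m+1) x) + B.dm m (B.dp (m+1) x)) +
          (B.dp m (B.dp (m+1) y) + B.dm m (B.dm (m+1) y)) := by rw [cx, ← cy]
      _ = B.dm m b₁ + B.dm m (B.dp (m+1) x) + B.dm m (B.dm (m+1) y) +
          (B.dm m b₂ + B.dp m (B.dp (m+1) y) + B.dp m (B.dm (m+1) x)) := by abel
  have hcanc : κ m (G.dp m g) +
      (B.dm m (κ (m + 1) g) + B.dp m u + B.dm m u) =
      B.dm m (κ (m + 1) g) + B.dp m u + B.dm m u := by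
    calc κ m (G.dp m g) + (B.dm m (κ (m + 1) g) + B.dp m u + B.dm m u)
        = (B.dm m (κ (m + 1) g) + κ m (G.dp m g) + B.dp m u) + B.dm m u := by abel
      _ = B.dp m v + B.dm m u := by rw [← hdpv]
      _ = B.dm m v + B.dp m u := hkey
      _ = (B.dm m (κ (m + 1) g) + B.dm m u) + B.dp m u := by rw [hdmv]
      _ = B.dm m (κ (m + 1) g) + B.dp m u + B.dm m u := by abel
  have hg0 : G.dp m g = 0 := schreier_cancel (hlev m) (hGgrp m) hcanc
  refine ⟨g, hg0, x, y, ?_⟩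
  rw [show κ (m+1) g + b₂ + B.dp (m+1) y + B.dm (m+1) x = κ (m+1) g + u by
    rw [hu_def]; abel]
  exact hg
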